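/- For any CPTP map Φ and q > 1, S_q^map(Φ) ≥ F_min · ln(N/Λ_Φ) + G_min · S_q^rec(Φ), where F_min = min(q/(q−1), 2) and G_min = min(q/(2(q−1)), 2(q−1)/q). -/

import Mathlib

open Matrix
open scoped BigOperators Kronecker ComplexOrder

noncomputable section

/-- Singular values of a square complex matrix: square roots of eigenvalues of `X * Xᴴ`. -/
def singularValues {n : Type*} [Fintype n] [DecidableEq n] (X : Matrix n n ℂ) : n → ℝ :=
  fun i => Real.sqrt ((Matrix.posSemidef_self_mul_conjTranspose X).1.eigenvalues i)

/-- Shannon entropy of the normalization of a nonnegative vector. -/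
def shannonH {ι : Type*} [Fintype ι] (v : ι → ℝ) : ℝ :=
  -∑ i, (v i / ∑ j, v j) * Real.log (v i / ∑ j, v j)

/-- Rényi entropy of order `q` of the normalization of a nonnegative vector. -/
def renyiH {ι : Type*} [Fintype ι] (q : ℝ) (v : ι → ℝ) : ℝ :=
  (1 / (1 - q)) * Real.log (∑ i, (v i / ∑ j, v j) ^ q)

/-- Unnormalized (von Neumann–type) entropy of the singular value vector. -/
def vnEntropy {n : Type*} [Fintype n] [DecidableEq n] (M : Matrix n n ℂ) : ℝ :=
  -∑ i, singularValues M i * Real.log (singularValues M i)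

/-- A quantum channel: completely positive (Kraus form) and trace preserving. -/
def IsCPTP {N : ℕ} (Φ : Matrix (Fin N) (Fin N) ℂ →ₗ[ℂ] Matrix (Fin N) (Fin N) ℂ) : Prop :=
  ∃ (k : ℕ) (A : Fin k → Matrix (Fin N) (Fin N) ℂ),
    (∀ ρ, Φ ρ = ∑ i, A i * ρ * (A i)ᴴ) ∧ (∑ i, (A i)ᴴ * A i = 1)

/-- Density matrix predicate. -/
def IsDensityMatrix {n : Type*} [Fintype n] [DecidableEq n] (ρ : Matrix n n ℂ) : Prop :=
  ρ.PosSemidef ∧ ρ.trace = 1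

/-- The Choi (dynamical) matrix of a linear map on matrices. -/
def choiMatrix {N : ℕ} (Φ : Matrix (Fin N) (Fin N) ℂ →ₗ[ℂ] Matrix (Fin N) (Fin N) ℂ) :
    Matrix (Fin N × Fin N) (Fin N × Fin N) ℂ :=
  fun p q => Φ (Matrix.single p.2 q.2 1) p.1 q.1

/-- The superoperator matrix of a linear map on matrices. -/
def superMatrix {N : ℕ} (Φ : Matrix (Fin N) (Fin N) ℂ →ₗ[ℂ] Matrix (Fin N) (Fin N) ℂ) :
    Matrix (Fin N × Fin N) (Fin N × Fin N) ℂ :=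
  fun p q => Φ (Matrix.single q.1 q.2 1) p.1 p.2

/-- Hilbert–Schmidt norm of a matrix. -/
def hsNorm {n : Type*} [Fintype n] [DecidableEq n] (M : Matrix n n ℂ) : ℝ :=
  Real.sqrt ((M * Mᴴ).trace.re)

/-- Largest singular value of the superoperator of `Φ`, as the operator norm w.r.t. HS norm. -/
def sigma1 {N : ℕ} (Φ : Matrix (Fin N) (Fin N) ℂ →ₗ[ℂ] Matrix (Fin N) (Fin N) ℂ) : ℝ :=
  sSup {r : ℝ | ∃ M : Matrix (Fin N) (Fin N) ℂ, hsNorm M = 1 ∧ r = hsNorm (Φ M)}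

/-- Sum of the (at most) `m` largest entries of a nonnegative vector. -/
def partialMax {ι : Type*} [Fintype ι] (v : ι → ℝ) (m : ℕ) : ℝ :=
  sSup {t : ℝ | ∃ s : Finset ι, s.card ≤ m ∧ t = ∑ i ∈ s, v i}

/-- `Majorizes w v` means `v ≺ w` (for nonnegative vectors, possibly of different lengths). -/
def Majorizes {ι κ : Type*} [Fintype ι] [Fintype κ] (w : ι → ℝ) (v : κ → ℝ) : Prop :=
  (∑ i, v i = ∑ i, w i) ∧ ∀ m : ℕ, partialMax v m ≤ partialMax w m


/-! Let `a` be the singular values of the Choi matrix and `b` those of the superoperator matrix.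
The Choi matrix is positive semidefinite with trace `N`, so `∑ a = N`, while `∑ b = Λ_Φ`; and the
two matrices are entry permutations of each other, so `∑ a² = ∑ b²`. Hence the collision entropies
satisfy `S₂(a) = S₂(b) + 2 log (N / Λ_Φ)`, and the bound follows by comparing `S_q` with `S₂` on
each side, using that `q ↦ S_q` is antitone and `q ↦ (1 - 1/q) S_q` is monotone (Hölder, and the
monotonicity of `ℓ^q` norms). -/

section PowerSums

variable {ι : Type*} [Fintype ι] {p : ι → ℝ}

theorem sum_rpow_le_rpow_sum (hp : 0 ≤ p) {t : ℝ} (ht : 1 ≤ t) :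
    ∑ i, p i ^ t ≤ (∑ i, p i) ^ t := by
  have hS : 0 ≤ ∑ i, p i := Finset.sum_nonneg fun i _ => hp i
  have ht' : t - 1 + 1 ≠ 0 := by linarith
  calc ∑ i, p i ^ t = ∑ i, p i ^ (t - 1) * p i := by
        simp only [← Real.rpow_add_one' (hp _) ht', sub_add_cancel]
    _ ≤ ∑ i, (∑ j, p j) ^ (t - 1) * p i := by
        refine Finset.sum_le_sum fun i _ => mul_le_mul_of_nonneg_right ?_ (hp i)
        exact Real.rpow_le_rpow (hp i) (Finset.single_le_sum (fun j _ => hp j) (Finset.mem_univ i))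
          (by linarith)
    _ = (∑ i, p i) ^ t := by
        rw [← Finset.mul_sum, ← Real.rpow_add_one' hS ht', sub_add_cancel]

theorem sum_rpow_le_sum_rpow_rpow_div (hp : 0 ≤ p) {r s : ℝ} (hr : 0 < r) (hrs : r ≤ s) :
    ∑ i, p i ^ s ≤ (∑ i, p i ^ r) ^ (s / r) := by
  calc ∑ i, p i ^ s = ∑ i, (p i ^ r) ^ (s / r) := by
        simp only [← Real.rpow_mul (hp _), mul_div_cancel₀ s hr.ne']
    _ ≤ _ := sum_rpow_le_rpow_sum (fun i => Real.rpow_nonneg (hp i) r) ((one_le_div hr).mpr hrs)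

theorem sum_rpow_le_sum_rpow_rpow_of_sum_eq_one (hp : 0 ≤ p) (h1 : ∑ i, p i = 1) {r s : ℝ}
    (hr : 1 < r) (hrs : r ≤ s) :
    ∑ i, p i ^ r ≤ (∑ i, p i ^ s) ^ ((r - 1) / (s - 1)) := by
  have hr1 : 0 < r - 1 := by linarith
  have hs1 : 0 < s - 1 := by linarith
  have H := Real.inner_le_weight_mul_Lp_of_nonneg Finset.univ
    (p := (s - 1) / (r - 1)) ((one_le_div hr1).mpr (by linarith)) p (fun i => p i ^ (r - 1)) hp
    (fun i => Real.rpow_nonneg (hp i) _)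
  have hpow : ∀ i, ∀ t : ℝ, t - 1 + 1 ≠ 0 → p i * p i ^ (t - 1) = p i ^ t := fun i t ht => by
    rw [mul_comm, ← Real.rpow_add_one' (hp i) ht, sub_add_cancel]
  simpa only [← Real.rpow_mul (hp _), mul_div_cancel₀ _ hr1.ne', h1, Real.one_rpow, one_mul,
    hpow _ _ (by linarith : r - 1 + 1 ≠ 0), hpow _ _ (by linarith : s - 1 + 1 ≠ 0), inv_div] using H

theorem sum_rpow_pos (hp : 0 ≤ p) (h : 0 < ∑ i, p i) (q : ℝ) : 0 < ∑ i, p i ^ q := by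
  obtain ⟨i, -, hi⟩ := Finset.exists_lt_of_sum_lt (by simpa using h : ∑ _ : ι, (0 : ℝ) < ∑ i, p i)
  exact Finset.sum_pos' (fun j _ => Real.rpow_nonneg (hp j) q)
    ⟨i, Finset.mem_univ i, Real.rpow_pos_of_pos hi q⟩

theorem sum_eq_zero_iff_sum_sq_eq_zero (hp : 0 ≤ p) : ∑ i, p i = 0 ↔ ∑ i, p i ^ 2 = 0 := by
  rw [Fintype.sum_eq_zero_iff_of_nonneg hp,
    Fintype.sum_eq_zero_iff_of_nonneg fun i => sq_nonneg (p i)]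
  simp [funext_iff]

end PowerSums

section Renyi

variable {ι : Type*} [Fintype ι] {v : ι → ℝ}

theorem renyiH_eq_neg_log_div {q : ℝ} (hq : q ≠ 1) :
    renyiH q v = -Real.log (∑ i, (v i / ∑ j, v j) ^ q) / (q - 1) := by
  have : q - 1 ≠ 0 := sub_ne_zero.mpr hq
  have : 1 - q ≠ 0 := sub_ne_zero.mpr hq.symm
  unfold renyiH
  field_simp
  ring

theorem renyiH_of_sum_eq_zero {q : ℝ} (hq : q ≠ 0) (h : ∑ i, v i = 0) : renyiH q v = 0 := by
  simp [renyiH, h, Real.zero_rpow hq]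

theorem renyiH_two (h : ∑ i, v i ≠ 0) :
    renyiH 2 v = 2 * Real.log (∑ i, v i) - Real.log (∑ i, v i ^ 2) := by
  have hsq : ∑ i, v i ^ 2 ≠ 0 := by
    contrapose! h
    rw [Finset.sum_eq_zero_iff_of_nonneg fun i _ => sq_nonneg (v i)] at h
    exact Finset.sum_eq_zero fun i hi => pow_eq_zero_iff two_ne_zero |>.mp (h i hi)
  simp only [renyiH, Real.rpow_two, div_pow, ← Finset.sum_div]
  rw [Real.log_div hsq (pow_ne_zero 2 h), Real.log_pow]
  norm_num

variable (hv : 0 ≤ v) (hS : 0 < ∑ i, v i)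
include hv hS

theorem renyiH_le_renyiH_of_le {r s : ℝ} (hr : 1 < r) (hrs : r ≤ s) :
    renyiH s v ≤ renyiH r v := by
  set p := fun i => v i / ∑ j, v j
  have hp : 0 ≤ p := fun i => div_nonneg (hv i) hS.le
  have hp1 : ∑ i, p i = 1 := by rw [← Finset.sum_div, div_self hS.ne']
  have hr1 : 0 < r - 1 := by linarith
  have hs1 : 0 < s - 1 := by linarith
  have hlog : Real.log (∑ i, p i ^ r) ≤ (r - 1) / (s - 1) * Real.log (∑ i, p i ^ s) := by
    rw [← Real.log_rpow (sum_rpow_pos hp (by linarith) s)]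
    exact Real.log_le_log (sum_rpow_pos hp (by linarith) r)
      (sum_rpow_le_sum_rpow_rpow_of_sum_eq_one hp hp1 hr hrs)
  rw [renyiH_eq_neg_log_div hr.ne', renyiH_eq_neg_log_div (by linarith), neg_div, neg_div,
    neg_le_neg_iff, div_le_div_iff₀ hr1 hs1]
  calc Real.log (∑ i, p i ^ r) * (s - 1)
      ≤ (r - 1) / (s - 1) * Real.log (∑ i, p i ^ s) * (s - 1) := by gcongr
    _ = Real.log (∑ i, p i ^ s) * (r - 1) := by field_simp

theorem mul_renyiH_le_mul_renyiH_of_le {r s : ℝ} (hr : 1 < r) (hrs : r ≤ s) :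
    (r - 1) / r * renyiH r v ≤ (s - 1) / s * renyiH s v := by
  set p := fun i => v i / ∑ j, v j
  have hp : 0 ≤ p := fun i => div_nonneg (hv i) hS.le
  have hp1 : ∑ i, p i = 1 := by rw [← Finset.sum_div, div_self hS.ne']
  have hr0 : 0 < r := by linarith
  have hs0 : 0 < s := by linarith
  have hlog : Real.log (∑ i, p i ^ s) ≤ s / r * Real.log (∑ i, p i ^ r) := by
    rw [← Real.log_rpow (sum_rpow_pos hp (by linarith) r)]
    exact Real.log_le_log (sum_rpow_pos hp (by linarith) s)
      (sum_rpow_le_sum_rpow_rpow_div hp hr0 hrs)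
  have hscaled : ∀ t : ℝ, 1 < t → (t - 1) / t * renyiH t v = -Real.log (∑ i, p i ^ t) / t := by
    intro t ht
    have : t - 1 ≠ 0 := by linarith
    rw [renyiH_eq_neg_log_div ht.ne']
    field_simp
    rfl
  rw [hscaled r hr, hscaled s (by linarith), neg_div, neg_div, neg_le_neg_iff,
    div_le_div_iff₀ hs0 hr0]
  calc Real.log (∑ i, p i ^ s) * r ≤ s / r * Real.log (∑ i, p i ^ r) * r := by gcongr
    _ = Real.log (∑ i, p i ^ r) * s := by field_simp

end Renyi

section SquareSumsEqual

variable {ι κ : Type*} [Fintype ι] [Fintype κ] {a : ι → ℝ} {b : κ → ℝ}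
  (ha : 0 ≤ a) (hb : 0 ≤ b) (hSa : 0 < ∑ i, a i) (hSb : 0 < ∑ j, b j)
  (hab : ∑ i, a i ^ 2 = ∑ j, b j ^ 2)

include hSa hSb hab in
theorem renyiH_two_eq_renyiH_two_add_log :
    renyiH 2 a = renyiH 2 b + 2 * Real.log ((∑ i, a i) / ∑ j, b j) := by
  rw [renyiH_two hSa.ne', renyiH_two hSb.ne', Real.log_div hSa.ne' hSb.ne', hab]
  ring

include ha hb hSa hSb hab

theorem renyiH_lower_bound_of_le_two {q : ℝ} (hq : 1 < q) (hq2 : q ≤ 2) :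
    2 * Real.log ((∑ i, a i) / ∑ j, b j) + 2 * (q - 1) / q * renyiH q b ≤ renyiH q a := by
  have hid := renyiH_two_eq_renyiH_two_add_log hSa hSb hab
  have ha2 := renyiH_le_renyiH_of_le ha hSa hq hq2
  have hb2 := mul_renyiH_le_mul_renyiH_of_le hb hSb hq hq2
  norm_num at hb2
  rw [mul_div_assoc]
  linarith

theorem renyiH_lower_bound_of_two_le {q : ℝ} (hq2 : 2 ≤ q) :
    q / (q - 1) * Real.log ((∑ i, a i) / ∑ j, b j) + q / (2 * (q - 1)) * renyiH q b
      ≤ renyiH q a := by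
  have hq1 : 0 < q - 1 := by linarith
  have ha2 : q / (2 * (q - 1)) * renyiH 2 a ≤ renyiH q a := by
    have := mul_renyiH_le_mul_renyiH_of_le ha hSa one_lt_two hq2
    calc q / (2 * (q - 1)) * renyiH 2 a = q / (q - 1) * ((2 - 1) / 2 * renyiH 2 a) := by
          field_simp; ring
      _ ≤ q / (q - 1) * ((q - 1) / q * renyiH q a) := by gcongr
      _ = renyiH q a := by field_simp
  have hb2 := renyiH_le_renyiH_of_le hb hSb one_lt_two hq2
  have hG0 : 0 ≤ q / (2 * (q - 1)) := by positivity
  have hFG : q / (2 * (q - 1)) * 2 = q / (q - 1) := by field_simp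
  calc q / (q - 1) * Real.log ((∑ i, a i) / ∑ j, b j) + q / (2 * (q - 1)) * renyiH q b
      ≤ q / (2 * (q - 1)) * (renyiH 2 b + 2 * Real.log ((∑ i, a i) / ∑ j, b j)) := by
        rw [mul_add, ← mul_assoc, hFG]
        linarith [mul_le_mul_of_nonneg_left hb2 hG0]
    _ = q / (2 * (q - 1)) * renyiH 2 a := by rw [renyiH_two_eq_renyiH_two_add_log hSa hSb hab]
    _ ≤ renyiH q a := ha2

end SquareSumsEqual

theorem renyiH_lower_bound_of_sum_sq_eq {ι κ : Type*} [Fintype ι] [Fintype κ]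
    {a : ι → ℝ} {b : κ → ℝ} (ha : 0 ≤ a) (hb : 0 ≤ b)
    (hab : ∑ i, a i ^ 2 = ∑ j, b j ^ 2) {q : ℝ} (hq : 1 < q) :
    min (q / (q - 1)) 2 * Real.log ((∑ i, a i) / ∑ j, b j)
      + min (q / (2 * (q - 1))) (2 * (q - 1) / q) * renyiH q b ≤ renyiH q a := by
  have hq0 : 0 < q := by linarith
  have hq1 : 0 < q - 1 := by linarith
  have hSab : ∑ i, a i = 0 ↔ ∑ j, b j = 0 := by
    rw [sum_eq_zero_iff_sum_sq_eq_zero ha, sum_eq_zero_iff_sum_sq_eq_zero hb, hab]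
  by_cases hSa : ∑ i, a i = 0
  · simp [hSa, hSab.mp hSa, renyiH_of_sum_eq_zero hq0.ne']
  have hSa' : 0 < ∑ i, a i := (Finset.sum_nonneg fun i _ => ha i).lt_of_ne' hSa
  have hSb' : 0 < ∑ j, b j := (Finset.sum_nonneg fun j _ => hb j).lt_of_ne' (hSab.not.mp hSa)
  rcases le_total q 2 with hq2 | hq2
  · rw [min_eq_right ((le_div_iff₀ hq1).mpr (by linarith)),
      min_eq_right ((div_le_div_iff₀ hq0 (by linarith)).mpr (by nlinarith))]
    exact renyiH_lower_bound_of_le_two ha hb hSa' hSb' hab hq hq2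
  · rw [min_eq_left ((div_le_iff₀ hq1).mpr (by linarith)),
      min_eq_left ((div_le_div_iff₀ (by linarith) hq0).mpr (by nlinarith))]
    exact renyiH_lower_bound_of_two_le ha hb hSa' hSb' hab hq2

section SingularValues

variable {n : Type*} [Fintype n] [DecidableEq n]

theorem singularValues_nonneg (X : Matrix n n ℂ) : 0 ≤ singularValues X :=
  fun _ => Real.sqrt_nonneg _

theorem sum_singularValues_sq (X : Matrix n n ℂ) :
    ∑ i, singularValues X i ^ 2 = ∑ i, ∑ j, Complex.normSq (X i j) := by
  have hY := posSemidef_self_mul_conjTranspose X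
  have h := congrArg RCLike.re hY.1.trace_eq_sum_eigenvalues
  simp only [map_sum, RCLike.ofReal_re] at h
  simp only [singularValues, Real.sq_sqrt (hY.eigenvalues_nonneg _), ← h]
  simp [trace, mul_apply, Complex.mul_conj]

theorem Matrix.IsHermitian.trace_cfc {A : Matrix n n ℂ} (hA : A.IsHermitian) (f : ℝ → ℝ) :
    (cfc f A).trace = ∑ i, (f (hA.eigenvalues i) : ℂ) := by
  rw [hA.cfc_eq, IsHermitian.cfc, Unitary.conjStarAlgAut_apply, trace_mul_cycle,
    Unitary.coe_star_mul_self, one_mul, trace_diagonal]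
  rfl

open scoped MatrixOrder in
theorem sum_singularValues_of_posSemidef {X : Matrix n n ℂ} (hX : X.PosSemidef) :
    ∑ i, singularValues X i = X.trace.re := by
  have hY := posSemidef_self_mul_conjTranspose X
  have hsqrt : cfc Real.sqrt (X * Xᴴ) = X := by
    rw [← cfcₙ_eq_cfc, ← CFC.sqrt_eq_real_sqrt _ hY.nonneg, hX.1.eq, CFC.sqrt_mul_self X hX.nonneg]
  calc ∑ i, singularValues X i = (cfc Real.sqrt (X * Xᴴ)).trace.re := by
        rw [hY.1.trace_cfc, Complex.re_sum]
        rfl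
    _ = X.trace.re := by rw [hsqrt]

end SingularValues

section Choi

variable {N : ℕ} (Φ : Matrix (Fin N) (Fin N) ℂ →ₗ[ℂ] Matrix (Fin N) (Fin N) ℂ)

theorem sum_normSq_choiMatrix :
    ∑ p, ∑ q, Complex.normSq (choiMatrix Φ p q)
      = ∑ p, ∑ q, Complex.normSq (superMatrix Φ p q) := by
  simp only [Fintype.sum_prod_type, choiMatrix, superMatrix]
  exact Finset.sum_congr rfl fun _ _ => Finset.sum_comm

variable {k : ℕ} {A : Fin k → Matrix (Fin N) (Fin N) ℂ} (hΦ : ∀ ρ, Φ ρ = ∑ i, A i * ρ * (A i)ᴴ)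
include hΦ

theorem choiMatrix_eq_sum_vecMulVec :
    choiMatrix Φ = ∑ i, vecMulVec (vec (A i)ᵀ) (star (vec (A i)ᵀ)) := by
  ext p q
  simp [choiMatrix, hΦ, Matrix.sum_apply, vecMulVec_apply, mul_apply, single_apply, ite_and, vec]

theorem choiMatrix_posSemidef : (choiMatrix Φ).PosSemidef := by
  rw [choiMatrix_eq_sum_vecMulVec Φ hΦ]
  exact posSemidef_sum _ fun i _ => posSemidef_vecMulVec_self_star _

theorem trace_choiMatrix (hA : ∑ i, (A i)ᴴ * A i = 1) : (choiMatrix Φ).trace = N := by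
  have htr : ∀ i, (vecMulVec (vec (A i)ᵀ) (star (vec (A i)ᵀ))).trace = ((A i)ᴴ * A i).trace := by
    intro i
    rw [trace_vecMulVec, dotProduct_comm, star_vec_dotProduct_vec,
      conjTranspose_transpose_eq_transpose_conjTranspose, ← transpose_mul, trace_transpose,
      trace_mul_comm]
  rw [choiMatrix_eq_sum_vecMulVec Φ hΦ, trace_sum]
  simp only [htr]
  rw [← trace_sum, hA, trace_one, Fintype.card_fin]

end Choi

theorem renyi_map_entropy_lower_bound_general {N : ℕ}
    (Φ : Matrix (Fin N) (Fin N) ℂ →ₗ[ℂ] Matrix (Fin N) (Fin N) ℂ) (hΦ : IsCPTP Φ) (q : ℝ) (hq : 1 < q) :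
    min (q / (q - 1)) 2 * Real.log ((N : ℝ) / ∑ i, singularValues (superMatrix Φ) i)
        + min (q / (2 * (q - 1))) (2 * (q - 1) / q)
          * renyiH q (singularValues (superMatrix Φ))
      ≤ renyiH q (singularValues (choiMatrix Φ)) := by
  obtain ⟨k, A, hKraus, hTP⟩ := hΦ
  have hsum : ∑ i, singularValues (choiMatrix Φ) i = N := by
    rw [sum_singularValues_of_posSemidef (choiMatrix_posSemidef Φ hKraus),
      trace_choiMatrix Φ hKraus hTP, Complex.natCast_re]
  have hsq : ∑ i, singularValues (choiMatrix Φ) i ^ 2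
      = ∑ i, singularValues (superMatrix Φ) i ^ 2 := by
    rw [sum_singularValues_sq, sum_singularValues_sq, sum_normSq_choiMatrix]
  have := renyiH_lower_bound_of_sum_sq_eq (singularValues_nonneg _) (singularValues_nonneg _) hsq hq
  rwa [hsum] at this

theorem renyi_map_entropy_lower_bound {N : ℕ} (hN : 0 < N)
    (Φ : Matrix (Fin N) (Fin N) ℂ →ₗ[ℂ] Matrix (Fin N) (Fin N) ℂ) (hΦ : IsCPTP Φ) (q : ℝ) (hq : 1 < q) :
    min (q / (q - 1)) 2 * Real.log ((N : ℝ) / ∑ i, singularValues (superMatrix Φ) i)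
        + min (q / (2 * (q - 1))) (2 * (q - 1) / q)
          * renyiH q (singularValues (superMatrix Φ))
      ≤ renyiH q (singularValues (choiMatrix Φ)) :=
  renyi_map_entropy_lower_bound_general Φ hΦ q hq

end
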